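/- Let H be a 3-hypergraph whose line graph L(H) is 18-connected and has minimum degree at least 52. Let T be the set of vertices of H incident with at least 18 hyperedges (viewed as black vertices of the incidence graph IG(H)). Then T is 18-edge-connected in IG(H). -/

import Mathlib

open SimpleGraph

/-- The line graph of a hypergraph given by hyperedges `He : E → Finset V`:
vertices are hyperedges, two adjacent iff distinct and intersecting. -/
def hLineGraph {V E : Type} (He : E → Finset V) : SimpleGraph E where
  Adj e f := e ≠ f ∧ ∃ v, v ∈ He e ∧ v ∈ He f
  symm := ⟨by rintro e f ⟨h, v, h1, h2⟩; exact ⟨h.symm, v, h2, h1⟩⟩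
  loopless := ⟨by rintro e ⟨h, _⟩; exact h rfl⟩

/-- The incidence graph of a hypergraph: bipartite on `V ⊕ E`, with
`inl v` (black) adjacent to `inr e` (white) iff `v ∈ e`. -/
def incGraph {V E : Type} (He : E → Finset V) : SimpleGraph (V ⊕ E) where
  Adj x y := (∃ v e, x = Sum.inl v ∧ y = Sum.inr e ∧ v ∈ He e) ∨
             (∃ v e, x = Sum.inr e ∧ y = Sum.inl v ∧ v ∈ He e)
  symm := by constructor; rintro x y (⟨v, e, h1, h2, h3⟩ | ⟨v, e, h1, h2, h3⟩)
             · exact Or.inr ⟨v, e, h2, h1, h3⟩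
             · exact Or.inl ⟨v, e, h2, h1, h3⟩
  loopless := ⟨by rintro x (⟨v, e, h1, h2, _⟩ | ⟨v, e, h1, h2, _⟩) <;> simp_all⟩

/-- `T` is `k`-edge-connected in `G`: any two vertices of `T` are joined by
`k` pairwise edge-disjoint paths. -/
def EdgeConnectedIn {V : Type} (G : SimpleGraph V) (T : Set V) (k : ℕ) : Prop :=
  ∀ s₁ ∈ T, ∀ s₂ ∈ T, ∃ p : Fin k → G.Walk s₁ s₂,
    (∀ i, (p i).IsPath) ∧ ∀ i j, i ≠ j → ∀ e, e ∈ (p i).edges → e ∉ (p j).edges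

/-- `G` is `k`-connected: more than `k` vertices, and removing fewer than `k`
vertices leaves a connected graph. -/
def IsKConnected {V : Type} (G : SimpleGraph V) (k : ℕ) : Prop :=
  k < Nat.card V ∧ ∀ S : Set V, S.ncard < k → (G.induce (Sᶜ : Set V)).Connected

/-- A `T`-connector: a family of pairwise edge-disjoint `T`-paths (endpoints in `T`,
internal vertices outside `T`) such that short-cutting all of them yields a graph whose
induced subgraph on `T` is connected. -/
structure TConnector {V : Type} (G : SimpleGraph V) (T : Set V) where
  ι : Type
  finite : Finite ι
  a : ι → V
  b : ι → V
  walk : (i : ι) → G.Walk (a i) (b i)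
  isPath : ∀ i, (walk i).IsPath
  a_mem : ∀ i, a i ∈ T
  b_mem : ∀ i, b i ∈ T
  internal : ∀ i v, v ∈ (walk i).support → v ∈ T → v = a i ∨ v = b i
  edgeDisj : ∀ i j, i ≠ j → ∀ e, e ∈ (walk i).edges → e ∉ (walk j).edges
  shortcut_conn :
    ((SimpleGraph.fromEdgeSet (⋃ i, {s(a i, b i)})).induce T).Connected

/-- The edge set of a `T`-connector (the union of the edges of its paths). -/
def TConnector.edgeSet {V : Type} {G : SimpleGraph V} {T : Set V}
    (C : TConnector G T) : Set (Sym2 V) :=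
  ⋃ i, {e | e ∈ (C.walk i).edges}

/-- The `T`-connector viewed as a graph (the union of its paths). -/
def TConnector.graph {V : Type} {G : SimpleGraph V} {T : Set V}
    (C : TConnector G T) : SimpleGraph V :=
  SimpleGraph.fromEdgeSet C.edgeSet

/-- A closed `W`-quasitrail: a closed walk traversing each edge at most twice such
that every doubly-traversed edge `e` has an endpoint `w ∈ W` visited exactly once
whose predecessor and successor edges both equal `e`. -/
def IsClosedQuasitrail {V : Type} [DecidableEq V] (G : SimpleGraph V) (W : Set V)
    {x : V} (p : G.Walk x x) : Prop :=
  (∀ e, p.edges.count e ≤ 2) ∧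
  ∀ e, p.edges.count e = 2 →
    ∃ w u, w ∈ W ∧ e = s(u, w) ∧ p.support.tail.count w = 1 ∧
      ∃ d₁ d₂ : G.Dart, d₁.toProd = (u, w) ∧ d₂.toProd = (w, u) ∧
        [d₁, d₂] <:+: (p.darts ++ p.darts)

/-!
Two heavy vertices `u` and `v` lie in at least 18 hyperedges each. Since `L(H)` is 18-connected,
fewer than 18 hyperedges cannot separate these two fans in `L(H)`, so Menger's theorem gives 18
vertex-disjoint paths of `L(H)` between them. A path `e₀ e₁ … eₘ` of `L(H)` lifts to a `u`–`v`
path of `IG(H)` whose edges all have their white end among `e₀, …, eₘ`; as every edge of `IG(H)`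
has exactly one white end, the lifts of vertex-disjoint paths are edge-disjoint.

Menger's theorem is proved by induction on the number of edges. Contract an edge `xy`. If the
contraction still needs `k` vertices to separate the images of `A` and `B`, its `k` disjoint
paths lift back to `G`. Otherwise a small separator of the contraction gives an `A`–`B` separator
`S` of `G` with at most `k` vertices containing `x` and `y`; in `G - xy` there are then `k`
disjoint `A`–`S` paths and `k` disjoint `B`–`S` paths, which glue along `S`.
-/

namespace SimpleGraph

variable {V : Type*} {G : SimpleGraph V} {A B S : Finset V} {k : ℕ}

def Separates (G : SimpleGraph V) (A B S : Finset V) : Prop :=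
  ∀ a ∈ A, ∀ b ∈ B, ∀ p : G.Walk a b, ∃ s ∈ S, s ∈ p.support

theorem Separates.symm (h : G.Separates A B S) : G.Separates B A S := by
  intro b hb a ha p
  simpa using h a ha b hb p.reverse

structure DisjointPaths (G : SimpleGraph V) (A B : Finset V) (k : ℕ) where
  src : Fin k → V
  dst : Fin k → V
  walk : ∀ i, G.Walk (src i) (dst i)
  src_mem : ∀ i, src i ∈ A
  dst_mem : ∀ i, dst i ∈ B
  isPath : ∀ i, (walk i).IsPath
  disjoint : Pairwise fun i j => (walk i).support.Disjoint (walk j).support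

theorem DisjointPaths.dst_injective (P : G.DisjointPaths A B k) : Function.Injective P.dst := by
  intro i j h
  by_contra hij
  have hj : P.dst i ∈ (P.walk j).support := by rw [h]; exact (P.walk j).end_mem_support
  exact P.disjoint hij (P.walk i).end_mem_support hj

def DisjointPaths.mapLe {H : SimpleGraph V} (h : G ≤ H) (P : G.DisjointPaths A B k) :
    H.DisjointPaths A B k where
  src := P.src
  dst := P.dst
  walk i := (P.walk i).mapLe h
  src_mem := P.src_mem
  dst_mem := P.dst_mem
  isPath i := (P.isPath i).mapLe h
  disjoint i j hij := by simpa only [Walk.support_mapLe_eq_support] using P.disjoint hij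

theorem nonempty_disjointPaths_of_walks [DecidableEq V] (a b : Fin k → V)
    (p : ∀ i, G.Walk (a i) (b i)) (ha : ∀ i, a i ∈ A) (hb : ∀ i, b i ∈ B)
    (hp : Pairwise fun i j => (p i).support.Disjoint (p j).support) :
    Nonempty (G.DisjointPaths A B k) :=
  ⟨⟨a, b, fun i => (p i).bypass, ha, hb, fun i => (p i).bypass_isPath, fun _ _ hij _ hi hj =>
    hp hij ((p _).support_bypass_subset_support hi) ((p _).support_bypass_subset_support hj)⟩⟩

theorem nonempty_disjointPaths_of_le_card_inter [DecidableEq V] (h : k ≤ (A ∩ B).card) :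
    Nonempty (G.DisjointPaths A B k) := by
  obtain ⟨e⟩ : Nonempty (Fin k ↪ (A ∩ B : Finset V)) :=
    Function.Embedding.nonempty_of_card_le (by simpa using h)
  refine ⟨⟨fun i => e i, fun i => e i, fun _ => .nil, fun i => (Finset.mem_inter.1 (e i).2).1,
    fun i => (Finset.mem_inter.1 (e i).2).2, fun _ => .nil, fun i j hij v hi hj => hij ?_⟩⟩
  simp only [Walk.support_nil, List.mem_singleton] at hi hj
  exact e.injective (Subtype.ext (hi.symm.trans hj))

theorem separates_inter_of_forall_not_adj [DecidableEq V] (hG : ∀ x y, ¬G.Adj x y)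
    (A B : Finset V) : G.Separates A B (A ∩ B) := by
  intro a ha b hb p
  cases p with
  | nil => exact ⟨a, Finset.mem_inter.2 ⟨ha, hb⟩, by simp⟩
  | cons h _ => exact absurd h (hG _ _)

theorem Walk.exists_prefix_to_first (P : V → Prop) {a b : V} (p : G.Walk a b)
    (h : ∃ s ∈ p.support, P s) :
    ∃ c, P c ∧ ∃ q : G.Walk a c, (∀ v ∈ q.support, P v → v = c) ∧ q.support ⊆ p.support := by
  induction p with
  | nil =>
    obtain ⟨s, hs, hPs⟩ := h
    rw [Walk.support_nil, List.mem_singleton] at hs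
    subst hs
    exact ⟨s, hPs, .nil, by simp, by simp⟩
  | @cons u w b hadj p ih =>
    by_cases hu : P u
    · exact ⟨u, hu, .nil, by simp, by simp⟩
    obtain ⟨c, hc, q, hqP, hqp⟩ := ih (by simpa [hu] using h)
    exact ⟨c, hc, .cons hadj q, by simpa [hu] using hqP,
      by simpa using List.subset_cons_of_subset u hqp⟩

theorem DisjointPaths.exists_eq_dst_of_mem [DecidableEq V] (P : G.DisjointPaths A S k) :
    ∃ P' : G.DisjointPaths A S k, ∀ i, ∀ v ∈ (P'.walk i).support, v ∈ S → v = P'.dst i := by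
  have h i := (P.walk i).exists_prefix_to_first (· ∈ S)
    ⟨_, (P.walk i).end_mem_support, P.dst_mem i⟩
  choose c hc q hqS hqP using h
  have hsub i : (q i).bypass.support ⊆ (P.walk i).support :=
    List.Subset.trans (q i).support_bypass_subset_support (hqP i)
  exact ⟨⟨P.src, c, fun i => (q i).bypass, P.src_mem, hc, fun i => (q i).bypass_isPath,
    fun i j hij _ hi hj => P.disjoint hij (hsub i hi) (hsub j hj)⟩,
    fun i v hv => hqS i v ((q i).support_bypass_subset_support hv)⟩

theorem Separates.eq_of_mem_support_of_mem_support [DecidableEq V] (hS : G.Separates A B S)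
    {a b c d v : V} (ha : a ∈ A) (hb : b ∈ B) {p : G.Walk a c} {q : G.Walk b d}
    (hp : p.IsPath) (hq : q.IsPath) (hc : c ∈ S) (hd : d ∈ S)
    (hpS : ∀ u ∈ p.support, u ∈ S → u = c) (hqS : ∀ u ∈ q.support, u ∈ S → u = d)
    (hvp : v ∈ p.support) (hvq : v ∈ q.support) : v = c ∧ v = d := by
  suffices hv : v ∈ S from ⟨hpS v hvp hv, hqS v hvq hv⟩
  by_contra hv
  obtain ⟨s, hs, hsW⟩ := hS a ha b hb ((p.takeUntil v hvp).append (q.takeUntil v hvq).reverse)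
  rw [Walk.mem_support_append_iff, Walk.support_reverse, List.mem_reverse] at hsW
  rcases hsW with h | h
  · obtain rfl := hpS s (p.support_takeUntil_subset_support hvp h) hs
    exact Walk.endpoint_notMem_support_takeUntil hp hvp (ne_of_mem_of_not_mem hs hv) h
  · obtain rfl := hqS s (q.support_takeUntil_subset_support hvq h) hs
    exact Walk.endpoint_notMem_support_takeUntil hq hvq (ne_of_mem_of_not_mem hs hv) h

theorem Separates.nonempty_disjointPaths [DecidableEq V] (hS : G.Separates A B S)
    (hcard : S.card ≤ k) (P : G.DisjointPaths A S k) (Q : G.DisjointPaths B S k)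
    (hP : ∀ i, ∀ v ∈ (P.walk i).support, v ∈ S → v = P.dst i)
    (hQ : ∀ i, ∀ v ∈ (Q.walk i).support, v ∈ S → v = Q.dst i) :
    Nonempty (G.DisjointPaths A B k) := by
  have hmeet i j v (hi : v ∈ (P.walk i).support) (hj : v ∈ (Q.walk j).support) :
      P.dst i = Q.dst j :=
    have h := hS.eq_of_mem_support_of_mem_support (P.src_mem i) (Q.src_mem j) (P.isPath i)
      (Q.isPath j) (P.dst_mem i) (Q.dst_mem j) (hP i) (hQ j) hi hj
    h.1.symm.trans h.2
  have hQdst : Finset.univ.image Q.dst = S :=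
    Finset.eq_of_subset_of_card_le (Finset.image_subset_iff.2 fun j _ => Q.dst_mem j)
      (by rw [Finset.card_image_of_injective _ Q.dst_injective]; simpa using hcard)
  have hσ i : ∃ j, Q.dst j = P.dst i := by simpa [← hQdst] using P.dst_mem i
  choose σ hσ using hσ
  refine nonempty_disjointPaths_of_walks P.src (fun i => Q.src (σ i))
    (fun i => (P.walk i).append ((Q.walk (σ i)).reverse.copy (hσ i) rfl)) P.src_mem
    (fun i => Q.src_mem (σ i)) fun i j hij v hvi hvj => ?_
  simp only [Walk.mem_support_append_iff, Walk.support_copy, Walk.support_reverse,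
    List.mem_reverse] at hvi hvj
  rcases hvi with hi | hi <;> rcases hvj with hj | hj
  · exact P.disjoint hij hi hj
  · exact hij (P.dst_injective ((hmeet i _ v hi hj).trans (hσ j)))
  · exact hij (P.dst_injective ((hmeet j _ v hj hi).trans (hσ i))).symm
  · exact Q.disjoint (fun h => hij (P.dst_injective (by rw [← hσ i, ← hσ j, h]))) hi hj

theorem Separates.of_deleteEdges {T : Finset V} {x y : V} (hS : G.Separates A B S)
    (hx : x ∈ S) (hy : y ∈ S) (hxy : x ≠ y) (hT : (G.deleteEdges {s(x, y)}).Separates A S T) :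
    G.Separates A B T := by
  intro a ha b hb p
  obtain ⟨c, hc, q, hqS, hqp⟩ := p.exists_prefix_to_first (· ∈ S) <| by
    obtain ⟨s, hs, hsp⟩ := hS a ha b hb p
    exact ⟨s, hsp, hs⟩
  -- a prefix meeting `S` only at its end cannot use an edge inside `S`
  have he : s(x, y) ∉ q.edges := fun he => hxy <|
    (hqS x (q.fst_mem_support_of_mem_edges he) hx).trans
      (hqS y (q.snd_mem_support_of_mem_edges he) hy).symm
  obtain ⟨t, ht, htq⟩ := hT a ha c hc (q.toDeleteEdge _ he)
  exact ⟨t, ht, hqp (by simpa using htq)⟩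

theorem Separates.nonempty_disjointPaths_of_deleteEdges [DecidableEq V] {x y : V}
    (hS : G.Separates A B S) (hcard : S.card ≤ k) (hx : x ∈ S) (hy : y ∈ S) (hxy : x ≠ y)
    (hsep : ∀ T, G.Separates A B T → k ≤ T.card)
    (ih : ∀ A' B' : Finset V, (∀ T, (G.deleteEdges {s(x, y)}).Separates A' B' T → k ≤ T.card) →
      Nonempty ((G.deleteEdges {s(x, y)}).DisjointPaths A' B' k)) :
    Nonempty (G.DisjointPaths A B k) := by
  have half A' B' (hS' : G.Separates A' B' S) (hsep' : ∀ T, G.Separates A' B' T → k ≤ T.card) :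
      ∃ P : G.DisjointPaths A' S k, ∀ i, ∀ v ∈ (P.walk i).support, v ∈ S → v = P.dst i := by
    obtain ⟨P⟩ := ih A' S fun T hT => hsep' T (hS'.of_deleteEdges hx hy hxy hT)
    exact (P.mapLe (G.deleteEdges_le _)).exists_eq_dst_of_mem
  obtain ⟨P, hP⟩ := half A B hS hsep
  obtain ⟨Q, hQ⟩ := half B A hS.symm fun T hT => hsep T hT.symm
  exact hS.nonempty_disjointPaths hcard P Q hP hQ

section map

variable {W : Type*} {f : V → W}

theorem Walk.exists_walk_map (f : V → W) {a b : V} (p : G.Walk a b) :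
    ∃ q : (G.map f).Walk (f a) (f b), q.support ⊆ p.support.map f := by
  induction p with
  | nil => exact ⟨.nil, by simp⟩
  | @cons u v b h p ih =>
    obtain ⟨q, hq⟩ := ih
    by_cases hf : f u = f v
    · exact ⟨q.copy hf.symm rfl, by simpa using List.subset_cons_of_subset _ hq⟩
    · exact ⟨.cons (map_adj_apply' h hf) q, by simpa using List.cons_subset_cons _ hq⟩

theorem exists_walk_of_map_eq (hf : ∀ u v, f u = f v → u = v ∨ G.Adj u v) {s t : V}
    (h : f s = f t) : ∃ q : G.Walk s t, ∀ v ∈ q.support, f v = f s := by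
  rcases hf s t h with rfl | hadj
  · exact ⟨.nil, by simp⟩
  · exact ⟨.cons hadj .nil, by simp [h]⟩

theorem Walk.exists_walk_of_map (hf : ∀ u v, f u = f v → u = v ∨ G.Adj u v) {a b : W}
    (p : (G.map f).Walk a b) (s t : V) (hs : f s = a) (ht : f t = b) :
    ∃ q : G.Walk s t, q.support.map f ⊆ p.support := by
  induction p generalizing s with
  | nil =>
    obtain ⟨q, hq⟩ := exists_walk_of_map_eq hf (hs.trans ht.symm)
    refine ⟨q, fun z hz => ?_⟩
    obtain ⟨v, hv, rfl⟩ := List.mem_map.1 hz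
    simp [hq v hv, hs]
  | cons h p ih =>
    obtain ⟨-, u, w, huw, rfl, rfl⟩ := h
    obtain ⟨q₁, hq₁⟩ := exists_walk_of_map_eq hf hs
    obtain ⟨q₂, hq₂⟩ := ih w rfl ht
    refine ⟨q₁.append (.cons huw q₂), fun z hz => ?_⟩
    obtain ⟨v, hv, rfl⟩ := List.mem_map.1 hz
    rw [Walk.mem_support_append_iff, Walk.support_cons, List.mem_cons] at hv
    rcases hv with hv | rfl | hv
    · simp [hq₁ v hv, hs]
    · simp
    · exact List.mem_cons_of_mem _ (hq₂ (List.mem_map_of_mem hv))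

theorem DisjointPaths.nonempty_of_map [DecidableEq V] [DecidableEq W]
    (hf : ∀ u v, f u = f v → u = v ∨ G.Adj u v)
    (P : (G.map f).DisjointPaths (A.image f) (B.image f) k) : Nonempty (G.DisjointPaths A B k) := by
  have h i : ∃ a ∈ A, ∃ b ∈ B, ∃ q : G.Walk a b, q.support.map f ⊆ (P.walk i).support := by
    obtain ⟨a, ha, hfa⟩ := Finset.mem_image.1 (P.src_mem i)
    obtain ⟨b, hb, hfb⟩ := Finset.mem_image.1 (P.dst_mem i)
    exact ⟨a, ha, b, hb, (P.walk i).exists_walk_of_map hf a b hfa hfb⟩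
  choose a ha b hb q hq using h
  exact nonempty_disjointPaths_of_walks a b q ha hb fun i j hij _ hi hj =>
    P.disjoint hij (hq i (List.mem_map_of_mem hi)) (hq j (List.mem_map_of_mem hj))

theorem Separates.of_map [Fintype V] [DecidableEq W] {Y : Finset W}
    (hY : (G.map f).Separates (A.image f) (B.image f) Y) :
    G.Separates A B (Finset.univ.filter fun z => f z ∈ Y) := by
  intro a ha b hb p
  obtain ⟨q, hq⟩ := p.exists_walk_map f
  obtain ⟨w, hw, hwq⟩ := hY _ (Finset.mem_image_of_mem f ha) _ (Finset.mem_image_of_mem f hb) q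
  obtain ⟨z, hz, rfl⟩ := List.mem_map.1 (hq hwq)
  exact ⟨z, by simpa using hw, hz⟩

theorem ncard_edgeSet_map_lt [Finite V] {u v : V} (huv : G.Adj u v) (hf : f u = f v) :
    (G.map f).edgeSet.ncard < G.edgeSet.ncard := by
  have hsub : (G.map f).edgeSet ⊆ Sym2.map f '' (G.edgeSet \ {s(u, v)}) := by
    intro e he
    induction e with
    | h a b =>
      obtain ⟨hab, u', v', huv', rfl, rfl⟩ := he
      refine ⟨s(u', v'), ⟨huv', fun h => hab ?_⟩, rfl⟩
      rcases Sym2.eq_iff.1 (Set.mem_singleton_iff.1 h) with ⟨rfl, rfl⟩ | ⟨rfl, rfl⟩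
      exacts [hf, hf.symm]
  calc (G.map f).edgeSet.ncard
      ≤ (Sym2.map f '' (G.edgeSet \ {s(u, v)})).ncard :=
        Set.ncard_le_ncard hsub ((Set.toFinite _).image _)
    _ ≤ (G.edgeSet \ {s(u, v)}).ncard := Set.ncard_image_le (Set.toFinite _)
    _ < G.edgeSet.ncard := Set.ncard_sdiff_singleton_lt_of_mem huv (Set.toFinite _)

end map

theorem Adj.eq_or_adj_of_update_eq [DecidableEq V] {x y u v : V} (hxy : G.Adj x y)
    (h : Function.update id y x u = Function.update id y x v) : u = v ∨ G.Adj u v := by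
  simp only [Function.update_apply, id] at h
  split_ifs at h with hu hv hv
  · exact Or.inl (hu.trans hv.symm)
  · exact Or.inr (hu ▸ h ▸ hxy.symm)
  · exact Or.inr (hv ▸ h ▸ hxy)
  · exact Or.inl h

theorem Separates.exists_mem_mem_of_map_update [Fintype V] [DecidableEq V] {Y : Finset V}
    {x y : V} (hxy : x ≠ y) (hsep : ∀ S, G.Separates A B S → k ≤ S.card)
    (hY : (G.map (Function.update id y x)).Separates (A.image (Function.update id y x))
      (B.image (Function.update id y x)) Y) (hYk : Y.card < k) :
    ∃ S, G.Separates A B S ∧ S.card ≤ k ∧ x ∈ S ∧ y ∈ S := by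
  set f := Function.update id y x
  have hfy : f y = x := Function.update_self ..
  have hf z (hz : z ≠ y) : f z = z := Function.update_of_ne hz ..
  set S := Finset.univ.filter fun z => f z ∈ Y
  have hS : G.Separates A B S := hY.of_map
  have hSY : S ⊆ insert y Y := fun z hz => by
    by_cases hzy : z = y
    · simp [hzy]
    · exact Finset.mem_insert_of_mem (by simpa [S, hf z hzy] using hz)
  have hxY : x ∈ Y := by
    by_contra hxY
    have hSY' : S ⊆ Y := fun z hz => by
      have hzy : z ≠ y := by rintro rfl; simp [S, hfy, hxY] at hz
      simpa [S, hf z hzy] using hz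
    exact absurd (hsep S hS) (not_le.2 ((Finset.card_le_card hSY').trans_lt hYk))
  exact ⟨S, hS, (Finset.card_le_card hSY).trans ((Finset.card_insert_le _ _).trans hYk),
    by simp [S, hf x hxy, hxY], by simp [S, hfy, hxY]⟩

theorem menger [Fintype V] [DecidableEq V] (G : SimpleGraph V) (A B : Finset V) (k : ℕ)
    (hsep : ∀ S, G.Separates A B S → k ≤ S.card) : Nonempty (G.DisjointPaths A B k) := by
  obtain ⟨n, hn⟩ : ∃ n, G.edgeSet.ncard = n := ⟨_, rfl⟩
  induction n using Nat.strong_induction_on generalizing G A B with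
  | _ n ih =>
  by_cases hG : ∀ x y, ¬G.Adj x y
  · exact nonempty_disjointPaths_of_le_card_inter <|
      hsep _ (separates_inter_of_forall_not_adj hG A B)
  push Not at hG
  obtain ⟨x, y, hxy⟩ := hG
  -- `f` contracts the edge `xy` onto `x`
  set f := Function.update id y x
  by_cases hmap : ∀ Y, (G.map f).Separates (A.image f) (B.image f) Y → k ≤ Y.card
  · obtain ⟨P⟩ := ih _ (hn ▸ ncard_edgeSet_map_lt hxy (by simp [f, hxy.ne])) (G.map f) _ _ hmap rfl
    exact P.nonempty_of_map fun u v => hxy.eq_or_adj_of_update_eq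
  · push Not at hmap
    obtain ⟨Y, hY, hYk⟩ := hmap
    obtain ⟨S, hS, hSk, hx, hy⟩ := hY.exists_mem_mem_of_map_update hxy.ne hsep hYk
    refine hS.nonempty_disjointPaths_of_deleteEdges hSk hx hy hxy.ne hsep fun A' B' h =>
      ih _ ?_ _ A' B' h rfl
    rw [← hn, edgeSet_deleteEdges]
    exact Set.ncard_sdiff_singleton_lt_of_mem hxy (Set.toFinite _)

end SimpleGraph

theorem IsKConnected.le_card_of_separates {V : Type} {G : SimpleGraph V} {k : ℕ}
    (hG : IsKConnected G k) {A B S : Finset V} (hA : k ≤ A.card) (hB : k ≤ B.card)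
    (hS : G.Separates A B S) : k ≤ S.card := by
  by_contra! hSk
  obtain ⟨a, ha, haS⟩ := Finset.exists_mem_notMem_of_card_lt_card (hSk.trans_le hA)
  obtain ⟨b, hb, hbS⟩ := Finset.exists_mem_notMem_of_card_lt_card (hSk.trans_le hB)
  obtain ⟨p⟩ := (hG.2 S (by rwa [Set.ncard_coe_finset])).preconnected
    (⟨a, haS⟩ : ((S : Set V)ᶜ : Set V)) ⟨b, hbS⟩
  let q : G.Walk a b := p.map (Embedding.induce _).toHom
  obtain ⟨s, hs, hsq⟩ := hS a ha b hb q
  obtain ⟨z, -, rfl⟩ := List.mem_map.1 (Walk.support_map _ p ▸ hsq)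
  exact z.2 hs

section incidence

variable {V E : Type} {He : E → Finset V}

theorem exists_incGraph_walk {e f : E} (p : (hLineGraph He).Walk e f) :
    ∃ q : (incGraph He).Walk (.inr e) (.inr f),
      ∀ d ∈ q.edges, ∃ g ∈ p.support, ∃ w, d = s(.inl w, .inr g) := by
  induction p with
  | nil => exact ⟨.nil, by simp⟩
  | @cons a m _ h p ih =>
    obtain ⟨q, hq⟩ := ih
    obtain ⟨-, w, hwa, hwm⟩ := id h
    have ha : (incGraph He).Adj (.inr a) (.inl w) := .inr ⟨w, a, rfl, rfl, hwa⟩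
    have hm : (incGraph He).Adj (.inl w) (.inr m) := .inl ⟨w, m, rfl, rfl, hwm⟩
    refine ⟨.cons ha (.cons hm q), fun d hd => ?_⟩
    simp only [Walk.edges_cons, List.mem_cons] at hd
    rcases hd with rfl | rfl | hd
    · exact ⟨a, by simp, w, Sym2.eq_swap⟩
    · exact ⟨m, by simp, w, rfl⟩
    · obtain ⟨g, hg, w', rfl⟩ := hq d hd
      exact ⟨g, List.mem_cons_of_mem _ hg, w', rfl⟩

theorem exists_incGraph_path [DecidableEq V] [DecidableEq E] {e f : E}
    (p : (hLineGraph He).Walk e f) {u v : V} (hu : u ∈ He e) (hv : v ∈ He f) :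
    ∃ W : (incGraph He).Walk (.inl u) (.inl v),
      W.IsPath ∧ ∀ d ∈ W.edges, ∃ g ∈ p.support, ∃ w, d = s(.inl w, .inr g) := by
  obtain ⟨q, hq⟩ := exists_incGraph_walk p
  have hue : (incGraph He).Adj (.inl u) (.inr e) := .inl ⟨u, e, rfl, rfl, hu⟩
  have hfv : (incGraph He).Adj (.inr f) (.inl v) := .inr ⟨v, f, rfl, rfl, hv⟩
  refine ⟨((Walk.cons hue q).concat hfv).bypass, Walk.bypass_isPath _, fun d hd => ?_⟩
  have hd := Walk.edges_bypass_subset_edges _ hd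
  simp only [Walk.edges_concat, Walk.edges_cons, List.concat_eq_append, List.mem_append,
    List.mem_cons, List.not_mem_nil, or_false] at hd
  rcases hd with (rfl | hd) | rfl
  · exact ⟨e, p.start_mem_support, u, rfl⟩
  · exact hq d hd
  · exact ⟨f, p.end_mem_support, v, Sym2.eq_swap⟩

end incidence

theorem heavy_vertices_edgeConnected_general {V E : Type} [Fintype E]
    (He : E → Finset V)
    (hconn : IsKConnected (hLineGraph He) 18) :
    EdgeConnectedIn (incGraph He)
      {x | ∃ v : V, x = Sum.inl v ∧ 18 ≤ {e | v ∈ He e}.ncard} 18 := by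
  classical
  rintro _ ⟨u, rfl, hu⟩ _ ⟨v, rfl, hv⟩
  have hfan w (hw : 18 ≤ {e | w ∈ He e}.ncard) : 18 ≤ (Finset.univ.filter (w ∈ He ·)).card := by
    rwa [Set.ncard_eq_toFinset_card', Set.toFinset_ofPred] at hw
  obtain ⟨P⟩ := menger (hLineGraph He) _ _ 18 fun S hS =>
    hconn.le_card_of_separates (hfan u hu) (hfan v hv) hS
  have hW i := exists_incGraph_path (P.walk i) (by simpa using P.src_mem i)
    (by simpa using P.dst_mem i)
  choose W hW hWe using hW
  refine ⟨W, hW, fun i j hij d hi hj => ?_⟩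
  obtain ⟨g, hg, w, rfl⟩ := hWe i _ hi
  obtain ⟨g', hg', w', h⟩ := hWe j _ hj
  obtain ⟨-, rfl⟩ : w = w' ∧ g = g' := by simpa using h
  exact P.disjoint hij hg hg'

/-- For a 3-hypergraph with 18-connected line graph of minimum degree
at least 52, the set of heavy vertices (black vertices incident with at least 18
hyperedges) is 18-edge-connected in the incidence graph. -/
theorem heavy_vertices_edgeConnected {V E : Type} [Fintype V] [Fintype E]
    (He : E → Finset V) (hrank : ∀ e, (He e).card ≤ 3)
    (hconn : IsKConnected (hLineGraph He) 18)
    (hdeg : ∀ e, 52 ≤ ((hLineGraph He).neighborSet e).ncard) :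
    EdgeConnectedIn (incGraph He)
      {x | ∃ v : V, x = Sum.inl v ∧ 18 ≤ {e | v ∈ He e}.ncard} 18 :=
  heavy_vertices_edgeConnected_general He hconn
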